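/- arXiv:quant-ph/0510203 — 2 statements merged into one kernel-verified Lean document; each statement's English description precedes it below -/
import Mathlib

section
/- If (v_1, ..., v_n) is a basis of the complex vector space V over ℂ(i1), then (v_1, ..., v_n) is also a basis of the free T-module M (i.e., T-linearly independent and T-spanning). -/
/-- Bicomplex numbers `w = z1 + z2·i2` with `z1, z2 ∈ ℂ(i1)`. -/
@[ext] structure Bc where
  z1 : ℂ
  z2 : ℂ

namespace Bc

instance : Add Bc := ⟨fun a b => ⟨a.z1 + b.z1, a.z2 + b.z2⟩⟩
instance : Mul Bc := ⟨fun a b => ⟨a.z1 * b.z1 - a.z2 * b.z2, a.z1 * b.z2 + a.z2 * b.z1⟩⟩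
instance : Neg Bc := ⟨fun a => ⟨-a.z1, -a.z2⟩⟩
instance : Zero Bc := ⟨⟨0, 0⟩⟩
instance : One Bc := ⟨⟨1, 0⟩⟩

@[simp] lemma add_def (a b : Bc) : a + b = ⟨a.z1 + b.z1, a.z2 + b.z2⟩ := rfl
@[simp] lemma mul_def (a b : Bc) :
    a * b = ⟨a.z1 * b.z1 - a.z2 * b.z2, a.z1 * b.z2 + a.z2 * b.z1⟩ := rfl
@[simp] lemma neg_def (a : Bc) : -a = ⟨-a.z1, -a.z2⟩ := rfl
@[simp] lemma zero_def : (0 : Bc) = ⟨0, 0⟩ := rfl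
@[simp] lemma one_def : (1 : Bc) = ⟨1, 0⟩ := rfl

instance : CommRing Bc where
  add_assoc a b c := by ext <;> simp <;> ring
  zero_add a := by ext <;> simp
  add_zero a := by ext <;> simp
  add_comm a b := by ext <;> simp <;> ring
  mul_assoc a b c := by ext <;> simp <;> ring
  one_mul a := by ext <;> simp
  mul_one a := by ext <;> simp
  left_distrib a b c := by ext <;> simp <;> ring
  right_distrib a b c := by ext <;> simp <;> ring
  mul_comm a b := by ext <;> simp <;> ring
  neg_add_cancel a := by ext <;> simp
  zero_mul a := by ext <;> simp
  mul_zero a := by ext <;> simp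
  nsmul := nsmulRec
  zsmul := zsmulRec

/-- The embedding of `ℂ(i1)` into the bicomplex numbers. -/
def ofC (z : ℂ) : Bc := ⟨z, 0⟩

def i1 : Bc := ⟨Complex.I, 0⟩
def i2 : Bc := ⟨0, 1⟩
def j : Bc := i1 * i2

/-- idempotent `e1 = (1+j)/2`. -/
noncomputable def e1 : Bc := ofC (1/2) * (1 + j)
/-- idempotent `e2 = (1-j)/2`. -/
noncomputable def e2 : Bc := ofC (1/2) * (1 - j)

noncomputable def conj1 (w : Bc) : Bc := ⟨(starRingEnd ℂ) w.z1, (starRingEnd ℂ) w.z2⟩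
def conj2 (w : Bc) : Bc := ⟨w.z1, -w.z2⟩
noncomputable def conj3 (w : Bc) : Bc := ⟨(starRingEnd ℂ) w.z1, -((starRingEnd ℂ) w.z2)⟩

/-- first idempotent component -/
def pi1 (w : Bc) : ℂ := w.z1 - w.z2 * Complex.I
/-- second idempotent component -/
def pi2 (w : Bc) : ℂ := w.z1 + w.z2 * Complex.I

noncomputable def mod1 (w : Bc) : ℝ := Real.sqrt (‖w.z1 ^ 2 + w.z2 ^ 2‖)
noncomputable def norm3 (w : Bc) : ℝ := Real.sqrt (‖w.z1‖ ^ 2 + ‖w.z2‖ ^ 2)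

end Bc


open Bc

/-- Free `Bc`-module of rank `n` with the canonical basis. -/
abbrev M (n : ℕ) := Fin n → Bc

/-- The associated complex vector space `V`: elements with coordinates in `ℂ(i1)`. -/
def Vset (n : ℕ) : Set (M n) := {X | ∀ l, (X l).z2 = 0}

/-- First idempotent projection `P₁ : M → V`. -/
def P1 {n : ℕ} (X : M n) : M n := fun l => ofC (pi1 (X l))
/-- Second idempotent projection `P₂ : M → V`. -/
def P2 {n : ℕ} (X : M n) : M n := fun l => ofC (pi2 (X l))


/-- `ofC` as a ring homomorphism. -/
def ofC' : ℂ →+* Bc where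
  toFun := ofC
  map_one' := by ext <;> simp [ofC]
  map_mul' a b := by ext <;> simp [ofC]
  map_zero' := by ext <;> simp [ofC]
  map_add' a b := by ext <;> simp [ofC]

/-- Any `ℂ(i1)`-basis of `V` is also a `Bc`-basis of `M`. -/
theorem complex_basis_is_T_basis (n : ℕ) (v : Fin n → (Fin n → ℂ))
    (hli : LinearIndependent ℂ v)
    (hsp : Submodule.span ℂ (Set.range v) = ⊤) :
    LinearIndependent Bc (fun l => (fun k => ofC (v l k) : M n)) ∧
    Submodule.span Bc (Set.range (fun l => (fun k => ofC (v l k) : M n))) = ⊤ := by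
  classical
  set A : Matrix (Fin n) (Fin n) ℂ := Matrix.of v with hA
  have hAunit : IsUnit A := Matrix.linearIndependent_rows_iff_isUnit.mp hli
  set B : Matrix (Fin n) (Fin n) Bc := (A.map ofC').transpose with hB
  have hBdet : IsUnit B.det := by
    rw [hB, Matrix.det_transpose, show A.map ⇑ofC' = ofC'.mapMatrix A from rfl, ← RingHom.map_det]
    exact (hAunit.map (Matrix.detMonoidHom)).map ofC'
  have hInv : Invertible B := B.invertibleOfIsUnitDet hBdet
  let E : (Fin n → Bc) ≃ₗ[Bc] (Fin n → Bc) := B.toLinearEquiv' hInv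
  let b : Module.Basis (Fin n) Bc (Fin n → Bc) := (Pi.basisFun Bc (Fin n)).map E
  have hb : ⇑b = (fun l => (fun k => ofC (v l k) : M n)) := by
    funext l
    have : b l = E (Pi.basisFun Bc (Fin n) l) := rfl
    rw [this]
    have hE : E (Pi.basisFun Bc (Fin n) l) = B.mulVec (Pi.basisFun Bc (Fin n) l) := rfl
    rw [hE]
    funext k
    simp only [Matrix.mulVec, dotProduct, Pi.basisFun_apply, Pi.single_apply,
      mul_ite, mul_one, mul_zero, hB, hA, Matrix.transpose_apply, Matrix.map_apply]
    rw [Finset.sum_ite_eq' (Finset.univ) l (fun x => ofC' (Matrix.of v x k))]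
    simp [ofC']
  constructor
  · have := b.linearIndependent
    rwa [hb] at this
  · have := b.span_eq
    rwa [hb] at this
end

section
/- Under a bicomplex scalar product on a free T-module M that is hyperbolic positive and closed on the associated complex vector space V, the restriction of (·,·) to V makes V into a complex pre-Hilbert (inner product) space over ℂ(i1): in particular (X,Y) = conj((Y,X)) and (X,X) ∈ ℝ≥0 for X, Y ∈ V. -/
open Bc

/-- The restriction of a bicomplex scalar product to `V` is a complex inner
product: it is conjugate-symmetric and positive on `V`. -/
theorem restriction_to_V_is_preHilbert (n : ℕ) (ip : M n → M n → Bc)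
    (h_add : ∀ X Y₁ Y₂ : M n, ip X (Y₁ + Y₂) = ip X Y₁ + ip X Y₂)
    (h_smul : ∀ (α : Bc) (X Y : M n), ip X (α • Y) = α * ip X Y)
    (h_conj : ∀ X Y : M n, ip X Y = conj3 (ip Y X))
    (h_def : ∀ X : M n, ip X X = 0 ↔ X = 0)
    (h_closed : ∀ X Y : M n, X ∈ Vset n → Y ∈ Vset n → (ip X Y).z2 = 0)
    (h_pos : ∀ X : M n, ∃ a b : ℝ, 0 ≤ a ∧ 0 ≤ b ∧
      ip X X = ofC (a : ℂ) * e1 + ofC (b : ℂ) * e2) :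
    (∀ X Y : M n, X ∈ Vset n → Y ∈ Vset n →
      (ip X Y).z2 = 0 ∧ (ip X Y).z1 = (starRingEnd ℂ) ((ip Y X).z1)) ∧
    (∀ X : M n, X ∈ Vset n → ∃ r : ℝ, 0 ≤ r ∧ ip X X = ofC (r : ℂ)) := by
  constructor
  · intro X Y hX hY
    refine ⟨h_closed X Y hX hY, ?_⟩
    rw [h_conj X Y]
    rfl
  · intro X hX
    obtain ⟨a, b, ha, hb, hab⟩ := h_pos X
    have hz2 : (ip X X).z2 = 0 := h_closed X X hX hX
    have he1 : e1 = ⟨1/2, Complex.I/2⟩ := by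
      show ofC (1/2) * (1 + j) = _
      simp [j, i1, i2, ofC]; ring
    have he2 : e2 = ⟨1/2, -(Complex.I/2)⟩ := by
      show ofC (1/2) * (1 - j) = _
      rw [sub_eq_add_neg]
      simp [j, i1, i2, ofC]; ring
    have heq : ip X X = ⟨((a:ℂ)+b)/2, ((a:ℂ)-b)*Complex.I/2⟩ := by
      rw [hab, he1, he2]; ext <;> simp [ofC] <;> ring
    have hz2' : ((a:ℂ)-b)*Complex.I/2 = 0 := by rw [heq] at hz2; exact hz2
    have hab2 : a = b := by
      have h : (a:ℂ) = b := by
        have h0 : ((a:ℂ) - b) * Complex.I = 0 := by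
          linear_combination 2 * hz2'
        rcases mul_eq_zero.mp h0 with h | h
        · exact sub_eq_zero.mp h
        · exact absurd h Complex.I_ne_zero
      exact_mod_cast h
    subst hab2
    refine ⟨a, ha, ?_⟩
    rw [heq]; ext <;> simp [ofC] <;> ring
end
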